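/- arXiv:1012.3335 — 5 statements merged into one kernel-verified Lean document; each statement's English description precedes it below -/
import Mathlib

section
/- Let U be p×n and W be n×n with U*U + W*W = I_n and I_n - W invertible. Define X = I_p - U(I_n - W*)^{-1}U* and Y = (I_n - W)(I_n - W*)^{-1}U*. Then the block matrix U_0 = [[X, U],[Y, W]] is unitary. -/
/-!
Write `B = 1 - Wᴴ` and `C = 1 - W`, so that `X = 1 - U B⁻¹ Uᴴ` and `Y = C B⁻¹ Uᴴ`. Output normality
`Uᴴ U = 1 - Wᴴ W` says exactly `Uᴴ U = B + C - B C`, hence `B⁻¹ (Uᴴ U) C⁻¹ = C⁻¹ + B⁻¹ - 1`.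
Since `Xᴴ = 1 - U C⁻¹ Uᴴ` and `Yᴴ = U C⁻¹ B`, every block of `U₀ U₀ᴴ` contains `Uᴴ U` only inside
`B⁻¹ (Uᴴ U) C⁻¹`, and substituting that identity collapses the four blocks to those of `1`.
-/

open Matrix

theorem inv_mul_add_sub_mul_mul_inv {α : Type*} [Ring α] {b c b' c' : α}
    (hb : b' * b = 1) (hc : c * c' = 1) :
    b' * (b + c - b * c) * c' = c' + b' - 1 := by
  have expand : b' * (b + c - b * c) * c' = b' * b * c' + b' * (c * c') - b' * b * (c * c') := by
    noncomm_ring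
  rw [expand, hb, hc]
  noncomm_ring

namespace Matrix

theorem conjTranspose_mul_self_eq_of_add_eq_one {R : Type*} [Ring R] [StarRing R]
    {m n : Type*} [Fintype m] [Fintype n] [DecidableEq n] {U : Matrix m n R} {W : Matrix n n R}
    (hon : Uᴴ * U + Wᴴ * W = 1) :
    Uᴴ * U = (1 - Wᴴ) + (1 - W) - (1 - Wᴴ) * (1 - W) := by
  rw [eq_sub_of_add_eq hon]
  noncomm_ring

section BlockIdentities

variable {R : Type*} [Ring R] {m n : Type*} [Fintype m] [Fintype n] [DecidableEq n]
  {U : Matrix m n R} {V : Matrix n m R} {B C B' C' : Matrix n n R}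

theorem one_sub_mul_one_sub_add_mul_eq_one [DecidableEq m]
    (hK : B' * (V * U) * C' = C' + B' - 1) :
    (1 - U * B' * V) * (1 - U * C' * V) + U * V = 1 := by
  have hcross : U * B' * V * (U * C' * V) = U * B' * V + U * C' * V - U * V := by
    calc U * B' * V * (U * C' * V) = U * (B' * (V * U) * C') * V := by simp only [Matrix.mul_assoc]
      _ = _ := by
        rw [hK]
        simp only [Matrix.mul_add, Matrix.add_mul, Matrix.mul_sub, Matrix.sub_mul, Matrix.mul_one]
        abel
  simp only [Matrix.sub_mul, Matrix.mul_sub, Matrix.one_mul, Matrix.mul_one, hcross]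
  abel

theorem one_sub_mul_mul_add_mul_one_sub_eq_zero [DecidableEq m]
    (hB : B' * B = 1) (hK : B' * (V * U) * C' = C' + B' - 1) :
    (1 - U * B' * V) * (U * C' * B) + U * (1 - B) = 0 := by
  have hcross : U * B' * V * (U * C' * B) = U * C' * B + U - U * B := by
    calc U * B' * V * (U * C' * B) = U * (B' * (V * U) * C') * B := by simp only [Matrix.mul_assoc]
      _ = _ := by
        rw [hK]
        simp only [Matrix.mul_add, Matrix.add_mul, Matrix.mul_sub, Matrix.sub_mul,
          Matrix.mul_one, Matrix.mul_assoc, hB]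
  simp only [Matrix.sub_mul, Matrix.mul_sub, Matrix.one_mul, Matrix.mul_one, hcross]
  abel

theorem mul_mul_one_sub_add_one_sub_mul_eq_zero [DecidableEq m]
    (hC : C * C' = 1) (hK : B' * (V * U) * C' = C' + B' - 1) :
    (C * B' * V) * (1 - U * C' * V) + (1 - C) * V = 0 := by
  have hcross : C * B' * V * (U * C' * V) = C * B' * V + V - C * V := by
    calc C * B' * V * (U * C' * V) = C * (B' * (V * U) * C') * V := by simp only [Matrix.mul_assoc]
      _ = _ := by
        rw [hK]
        simp only [Matrix.mul_add, Matrix.add_mul, Matrix.mul_sub, Matrix.sub_mul,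
          Matrix.mul_one, Matrix.one_mul, hC]
        abel
  simp only [Matrix.sub_mul, Matrix.mul_sub, Matrix.one_mul, Matrix.mul_one, hcross]
  abel

theorem mul_mul_add_one_sub_mul_one_sub_eq_one
    (hB : B' * B = 1) (hC : C * C' = 1) (hK : B' * (V * U) * C' = C' + B' - 1) :
    (C * B' * V) * (U * C' * B) + (1 - C) * (1 - B) = 1 := by
  have hcross : C * B' * V * (U * C' * B) = B + C - C * B := by
    calc C * B' * V * (U * C' * B) = C * (B' * (V * U) * C') * B := by simp only [Matrix.mul_assoc]
      _ = C * C' * B + C * (B' * B) - C * B := by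
        rw [hK]
        simp only [Matrix.mul_add, Matrix.add_mul, Matrix.mul_sub, Matrix.sub_mul,
          Matrix.mul_one, Matrix.mul_assoc]
      _ = _ := by rw [hC, hB, Matrix.one_mul, Matrix.mul_one]
  rw [hcross]
  noncomm_ring

end BlockIdentities

variable {R : Type*} [CommRing R] [StarRing R] {m n : Type*} [Fintype n] [DecidableEq n]

theorem conjTranspose_one_sub_mul_inv_mul [Fintype m] [DecidableEq m]
    (U : Matrix m n R) (W : Matrix n n R) :
    (1 - U * (1 - Wᴴ)⁻¹ * Uᴴ)ᴴ = 1 - U * (1 - W)⁻¹ * Uᴴ := by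
  simp only [conjTranspose_sub, conjTranspose_one, conjTranspose_mul, conjTranspose_conjTranspose,
    conjTranspose_nonsing_inv, Matrix.mul_assoc]

theorem conjTranspose_one_sub_mul_inv_mul_conjTranspose (U : Matrix m n R) (W : Matrix n n R) :
    ((1 - W) * (1 - Wᴴ)⁻¹ * Uᴴ)ᴴ = U * (1 - W)⁻¹ * (1 - Wᴴ) := by
  simp only [conjTranspose_sub, conjTranspose_one, conjTranspose_mul, conjTranspose_conjTranspose,
    conjTranspose_nonsing_inv, Matrix.mul_assoc]

end Matrix

theorem unitary_completion_explicit {p n : ℕ}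
    (U : Matrix (Fin p) (Fin n) ℂ) (W : Matrix (Fin n) (Fin n) ℂ)
    (hon : Uᴴ * U + Wᴴ * W = 1)
    (hinv : IsUnit (1 - W : Matrix (Fin n) (Fin n) ℂ)) :
    Matrix.fromBlocks
      (1 - U * (1 - Wᴴ)⁻¹ * Uᴴ) U
      ((1 - W) * (1 - Wᴴ)⁻¹ * Uᴴ) W ∈ Matrix.unitaryGroup (Fin p ⊕ Fin n) ℂ := by
  have hinv' : IsUnit (1 - Wᴴ) := by
    simpa only [conjTranspose_sub, conjTranspose_one] using (isUnit_conjTranspose _).mpr hinv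
  have hB : (1 - Wᴴ)⁻¹ * (1 - Wᴴ) = 1 := nonsing_inv_mul _ ((isUnit_iff_isUnit_det _).mp hinv')
  have hC : (1 - W) * (1 - W)⁻¹ = 1 := mul_nonsing_inv _ ((isUnit_iff_isUnit_det _).mp hinv)
  have hK : (1 - Wᴴ)⁻¹ * (Uᴴ * U) * (1 - W)⁻¹ = (1 - W)⁻¹ + (1 - Wᴴ)⁻¹ - 1 := by
    rw [conjTranspose_mul_self_eq_of_add_eq_one hon, inv_mul_add_sub_mul_mul_inv hB hC]
  have h12 := one_sub_mul_mul_add_mul_one_sub_eq_zero hB hK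
  have h21 := mul_mul_one_sub_add_one_sub_mul_eq_zero hC hK
  have h22 := mul_mul_add_one_sub_mul_one_sub_eq_one hB hC hK
  simp only [sub_sub_cancel] at h12 h21 h22
  rw [mem_unitaryGroup_iff, star_eq_conjTranspose, fromBlocks_conjTranspose,
    conjTranspose_one_sub_mul_inv_mul, conjTranspose_one_sub_mul_inv_mul_conjTranspose,
    fromBlocks_multiply, one_sub_mul_one_sub_add_mul_eq_one hK, h12, h21, h22, fromBlocks_one]
end

section
/- For any p×n complex matrix V, the block matrix [[(I_p + VV*)^{-1/2}, V(I_n + V*V)^{-1/2}], [-V*(I_p + VV*)^{-1/2}, (I_n + V*V)^{-1/2}]] is unitary, where M^{-1/2} denotes the inverse of the unique positive definite square root of the positive definite Hermitian matrix M. -/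
open Matrix
open scoped ComplexOrder

/-- The old Mathlib `Matrix.PosSemidef.sqrt` (removed upstream), with its original definition. -/
noncomputable def Matrix.PosSemidef.sqrt {n : Type*} [Fintype n] [DecidableEq n]
    {A : Matrix n n ℂ} (hA : A.PosSemidef) : Matrix n n ℂ :=
  hA.1.eigenvectorUnitary.1 * diagonal ((↑) ∘ (Real.sqrt ∘ hA.1.eigenvalues)) *
  (star hA.1.eigenvectorUnitary : Matrix n n ℂ)

/-!
Write `A = (1 + V Vᴴ)^{-1/2}` and `B = (1 + Vᴴ V)^{-1/2}`; both are Hermitian. Multiplying out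
`Mᴴ M` for the block matrix `M`, the off-diagonal blocks are `A V B - A V B = 0` and the diagonal
blocks are `A (1 + V Vᴴ) A = 1` and `B (1 + Vᴴ V) B = 1`; for square matrices `Mᴴ M = 1` already
means that `M` is unitary.
-/

namespace Matrix

section Blocks

variable {m n R : Type*} [Fintype m] [Fintype n] [DecidableEq m] [DecidableEq n]
  [CommRing R] [StarRing R]

theorem fromBlocks_mem_unitaryGroup_of_isHermitian (V : Matrix m n R)
    {A : Matrix m m R} {B : Matrix n n R} (hA : A.IsHermitian) (hB : B.IsHermitian)
    (hAV : A * (1 + V * Vᴴ) * A = 1) (hBV : B * (1 + Vᴴ * V) * B = 1) :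
    fromBlocks A (V * B) (-(Vᴴ * A)) B ∈ unitaryGroup (m ⊕ n) R := by
  rw [mem_unitaryGroup_iff', star_eq_conjTranspose, fromBlocks_conjTranspose,
    fromBlocks_multiply, ← fromBlocks_one]
  simp only [conjTranspose_neg, conjTranspose_mul, conjTranspose_conjTranspose, hA.eq, hB.eq,
    Matrix.neg_mul, Matrix.mul_neg, neg_neg]
  congr 1
  · rw [← hAV]; simp only [Matrix.mul_add, Matrix.add_mul, Matrix.mul_one, Matrix.mul_assoc]
  · simp only [Matrix.mul_assoc, add_neg_cancel]
  · simp only [Matrix.mul_assoc, add_neg_cancel]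
  · rw [← hBV]
    simp only [Matrix.mul_add, Matrix.add_mul, Matrix.mul_one, Matrix.mul_assoc, add_comm]

end Blocks

theorem inv_mul_mul_inv_eq_one_of_mul_self_eq {m R : Type*} [Fintype m] [DecidableEq m]
    [CommRing R] {S A : Matrix m m R} (hSA : S * S = A) (hA : IsUnit A) :
    S⁻¹ * A * S⁻¹ = 1 := by
  have hS : IsUnit S.det := isUnit_of_mul_isUnit_left <| by
    rwa [← det_mul, hSA, ← isUnit_iff_isUnit_det]
  rw [← hSA, Matrix.mul_assoc, Matrix.mul_assoc S, mul_nonsing_inv _ hS, Matrix.mul_one,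
    nonsing_inv_mul _ hS]

namespace PosSemidef

variable {n : Type*} [Fintype n] [DecidableEq n] {A : Matrix n n ℂ}

theorem isHermitian_sqrt (hA : A.PosSemidef) : hA.sqrt.IsHermitian := by
  rw [IsHermitian, sqrt, conjTranspose_mul, conjTranspose_mul, diagonal_conjTranspose,
    ← star_eq_conjTranspose, ← star_eq_conjTranspose, star_star, Matrix.mul_assoc]
  congr 3
  funext i
  simp

theorem sqrt_mul_self (hA : A.PosSemidef) : hA.sqrt * hA.sqrt = A := by
  set U : Matrix n n ℂ := hA.1.eigenvectorUnitary.1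
  set D : Matrix n n ℂ := diagonal ((↑) ∘ (Real.sqrt ∘ hA.1.eigenvalues))
  have hU : star U * U = 1 := Unitary.star_mul_self_of_mem hA.1.eigenvectorUnitary.2
  have hD : D * D = diagonal (RCLike.ofReal ∘ hA.1.eigenvalues) := by
    rw [diagonal_mul_diagonal]
    congr 1
    funext i
    simp only [Function.comp_apply, ← Complex.ofReal_mul,
      Real.mul_self_sqrt (hA.eigenvalues_nonneg i)]
    rfl
  conv_rhs => rw [hA.1.spectral_theorem, Unitary.conjStarAlgAut_apply]
  calc hA.sqrt * hA.sqrt = U * D * (star U * U) * D * star U := by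
        simp only [sqrt, U, D, Matrix.mul_assoc]
    _ = _ := by rw [hU, Matrix.mul_one, Matrix.mul_assoc U D D, hD]

theorem inv_sqrt_mul_mul_inv_sqrt (hA : A.PosSemidef) (hA' : IsUnit A) :
    hA.sqrt⁻¹ * A * hA.sqrt⁻¹ = 1 :=
  inv_mul_mul_inv_eq_one_of_mul_self_eq hA.sqrt_mul_self hA'

end PosSemidef

end Matrix

theorem halpern_unitary {p n : ℕ}
    (V : Matrix (Fin p) (Fin n) ℂ)
    (hp : ((1 : Matrix (Fin p) (Fin p) ℂ) + V * Vᴴ).PosSemidef)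
    (hn : ((1 : Matrix (Fin n) (Fin n) ℂ) + Vᴴ * V).PosSemidef) :
    Matrix.fromBlocks
      (hp.sqrt)⁻¹ (V * (hn.sqrt)⁻¹)
      (-(Vᴴ * (hp.sqrt)⁻¹)) (hn.sqrt)⁻¹ ∈ Matrix.unitaryGroup (Fin p ⊕ Fin n) ℂ := by
  have hp_unit : IsUnit (1 + V * Vᴴ) :=
    (PosDef.one.add_posSemidef (posSemidef_self_mul_conjTranspose V)).isUnit
  have hn_unit : IsUnit (1 + Vᴴ * V) :=
    (PosDef.one.add_posSemidef (posSemidef_conjTranspose_mul_self V)).isUnit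
  exact fromBlocks_mem_unitaryGroup_of_isHermitian V hp.isHermitian_sqrt.inv
    hn.isHermitian_sqrt.inv (hp.inv_sqrt_mul_mul_inv_sqrt hp_unit)
    (hn.inv_sqrt_mul_mul_inv_sqrt hn_unit)
end

section
/- If R = [[D, C],[B, A]] is a unitary (p+n)×(p+n) matrix and |z| = 1 with zI_n - A invertible, then the matrix G(z) = D + C(zI_n - A)^{-1}B is unitary. -/
open Matrix

theorem transfer_function_unitary_on_circle {p n : ℕ}
    (D : Matrix (Fin p) (Fin p) ℂ) (C : Matrix (Fin p) (Fin n) ℂ)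
    (B : Matrix (Fin n) (Fin p) ℂ) (A : Matrix (Fin n) (Fin n) ℂ)
    (hR : Matrix.fromBlocks D C B A ∈ Matrix.unitaryGroup (Fin p ⊕ Fin n) ℂ)
    (z : ℂ) (hz : ‖z‖ = 1)
    (hinv : IsUnit (z • (1 : Matrix (Fin n) (Fin n) ℂ) - A)) :
    D + C * (z • (1 : Matrix (Fin n) (Fin n) ℂ) - A)⁻¹ * B ∈
      Matrix.unitaryGroup (Fin p) ℂ := by
  rw [Matrix.mem_unitaryGroup_iff]
  set M : Matrix (Fin n) (Fin n) ℂ := z • (1 : Matrix (Fin n) (Fin n) ℂ) - A with hMdef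
  have hdet : IsUnit M.det := (Matrix.isUnit_iff_isUnit_det M).mp hinv
  have hMi : M * M⁻¹ = 1 := Matrix.mul_nonsing_inv M hdet
  have hMi' : M⁻¹ * M = 1 := Matrix.nonsing_inv_mul M hdet
  have hMH : Mᴴ * (M⁻¹)ᴴ = 1 := by
    rw [← Matrix.conjTranspose_mul, hMi', Matrix.conjTranspose_one]
  have hR' : Matrix.fromBlocks D C B A * star (Matrix.fromBlocks D C B A) = 1 :=
    (Matrix.mem_unitaryGroup_iff).mp hR
  have hblocks : Matrix.fromBlocks (D * Dᴴ + C * Cᴴ) (D * Bᴴ + C * Aᴴ)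
      (B * Dᴴ + A * Cᴴ) (B * Bᴴ + A * Aᴴ) =
      Matrix.fromBlocks 1 0 0 1 := by
    rw [Matrix.fromBlocks_one, ← hR']
    simp [Matrix.star_eq_conjTranspose, Matrix.fromBlocks_conjTranspose,
      Matrix.fromBlocks_multiply]
  have h11 : D * Dᴴ + C * Cᴴ = 1 := by
    simpa only [Matrix.toBlocks_fromBlocks₁₁] using congrArg Matrix.toBlocks₁₁ hblocks
  have h12 : D * Bᴴ + C * Aᴴ = 0 := by
    simpa only [Matrix.toBlocks_fromBlocks₁₂] using congrArg Matrix.toBlocks₁₂ hblocks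
  have h21 : B * Dᴴ + A * Cᴴ = 0 := by
    simpa only [Matrix.toBlocks_fromBlocks₂₁] using congrArg Matrix.toBlocks₂₁ hblocks
  have h22 : B * Bᴴ + A * Aᴴ = 1 := by
    simpa only [Matrix.toBlocks_fromBlocks₂₂] using congrArg Matrix.toBlocks₂₂ hblocks
  have hDD : D * Dᴴ = 1 - C * Cᴴ := eq_sub_of_add_eq h11
  have hDB : D * Bᴴ = -(C * Aᴴ) := eq_neg_of_add_eq_zero_left h12
  have hBD : B * Dᴴ = -(A * Cᴴ) := eq_neg_of_add_eq_zero_left h21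
  have hBB : B * Bᴴ = 1 - A * Aᴴ := eq_sub_of_add_eq h22
  have hzz : z * star z = 1 := by
    have : z * (starRingEnd ℂ) z = ((‖z‖ : ℂ)) ^ 2 := by
      rw [Complex.mul_conj, Complex.normSq_eq_norm_sq]; norm_cast
    rw [show star z = (starRingEnd ℂ) z from rfl, this, hz]; norm_num
  have hzz' : star z * z = 1 := by rw [mul_comm] at hzz; exact hzz
  have hK : M * Mᴴ + M * Aᴴ + A * Mᴴ + A * Aᴴ = 1 := by
    have hMH2 : Mᴴ = (star z) • (1 : Matrix (Fin n) (Fin n) ℂ) - Aᴴ := by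
      simp [hMdef, Matrix.conjTranspose_smul]
    rw [hMdef, hMH2]
    simp only [Matrix.mul_sub, Matrix.sub_mul, smul_mul_assoc, mul_smul_comm,
      Matrix.one_mul, Matrix.mul_one, smul_smul, hzz, hzz', one_smul, smul_sub, smul_add]
    abel
  have h1 : (1 : Matrix (Fin n) (Fin n) ℂ) - A * Aᴴ = M * Mᴴ + M * Aᴴ + A * Mᴴ := by
    rw [← hK]; abel
  have key : M⁻¹ * (1 - A * Aᴴ) * (M⁻¹)ᴴ = 1 + Aᴴ * (M⁻¹)ᴴ + M⁻¹ * A := by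
    rw [h1]
    have e1 : M⁻¹ * (M * Mᴴ + M * Aᴴ + A * Mᴴ) * (M⁻¹)ᴴ
        = (M⁻¹ * M) * (Mᴴ * (M⁻¹)ᴴ) + (M⁻¹ * M) * (Aᴴ * (M⁻¹)ᴴ)
          + (M⁻¹ * A) * (Mᴴ * (M⁻¹)ᴴ) := by noncomm_ring
    rw [e1, hMi', hMH]
    simp only [one_mul, mul_one]
  have expand : (D + C * M⁻¹ * B) * star (D + C * M⁻¹ * B)
      = D * Dᴴ + (D * Bᴴ) * (M⁻¹)ᴴ * Cᴴ + C * M⁻¹ * (B * Dᴴ)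
        + C * (M⁻¹ * (B * Bᴴ) * (M⁻¹)ᴴ) * Cᴴ := by
    simp only [Matrix.star_eq_conjTranspose, Matrix.conjTranspose_add,
      Matrix.conjTranspose_mul]
    simp only [add_mul, mul_add, Matrix.mul_assoc]
    abel
  rw [expand, hDD, hDB, hBD, hBB, key]
  simp only [Matrix.mul_neg, Matrix.neg_mul, Matrix.mul_add, Matrix.add_mul,
    Matrix.mul_one, Matrix.one_mul, Matrix.mul_assoc]
  abel
end

section
/- If R = [[D, C],[B, A]] is a unitary (p+n)×(p+n) matrix and |z| > 1 (with zI_n - A necessarily invertible since all eigenvalues of A lie in the closed unit disk), then G(z) = D + C(zI_n - A)^{-1}B satisfies G(z)G(z)* ≤ I_p (i.e., I_p - G(z)G(z)* is positive semidefinite). -/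
/-!
The column relation `Cᴴ C + Aᴴ A = 1` of `R` makes `A` a contraction, so `A v = z v` with
`‖z‖ > 1` forces `v = 0` and `z - A` is invertible. With `F = (z - A)⁻¹` one has `1 + F A = z F`,
and substituting the row relations of `R Rᴴ = 1` into `1 - G Gᴴ` collapses it to
`C ((1 + F A)(1 + F A)ᴴ - F Fᴴ) Cᴴ = (|z|² - 1) (C F)(C F)ᴴ`, which is positive semidefinite.
-/

open Matrix
open scoped ComplexOrder

namespace Matrix

section

variable {m n α : Type*} [Fintype m] [Fintype n] [CommRing α] [StarRing α]
  {D : Matrix m m α} {C : Matrix m n α} {B : Matrix n m α} {A : Matrix n n α}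

theorem fromBlocks_mul_conjTranspose_self :
    fromBlocks D C B A * (fromBlocks D C B A)ᴴ =
      fromBlocks (D * Dᴴ + C * Cᴴ) (D * Bᴴ + C * Aᴴ) (B * Dᴴ + A * Cᴴ) (B * Bᴴ + A * Aᴴ) := by
  rw [fromBlocks_conjTranspose, fromBlocks_multiply]

theorem conjTranspose_mul_fromBlocks_self :
    (fromBlocks D C B A)ᴴ * fromBlocks D C B A =
      fromBlocks (Dᴴ * D + Bᴴ * B) (Dᴴ * C + Bᴴ * A) (Cᴴ * D + Aᴴ * B) (Cᴴ * C + Aᴴ * A) := by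
  rw [fromBlocks_conjTranspose, fromBlocks_multiply]

variable [DecidableEq m] [DecidableEq n]

theorem one_sub_transfer_mul_conjTranspose_transfer
    (hR : fromBlocks D C B A * (fromBlocks D C B A)ᴴ = 1) {z : α} {F : Matrix n n α}
    (hF : F * (z • 1 - A) = 1) :
    1 - (D + C * F * B) * (D + C * F * B)ᴴ = (star z * z - 1) • (C * F * (C * F)ᴴ) := by
  rw [fromBlocks_mul_conjTranspose_self, ← fromBlocks_one, fromBlocks_inj] at hR
  obtain ⟨hDD, hDB, hBD, hBB⟩ := hR
  have hFA : 1 + F * A = z • F := by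
    rw [← hF, mul_sub, mul_smul_comm, mul_one, sub_add_cancel]
  have hdefect : 1 - (D + C * F * B) * (D + C * F * B)ᴴ
        - C * ((1 + F * A) * (1 + F * A)ᴴ - F * Fᴴ) * Cᴴ =
      -(D * Dᴴ + C * Cᴴ - 1) - (D * Bᴴ + C * Aᴴ) * (Fᴴ * Cᴴ) - C * (F * (B * Dᴴ + A * Cᴴ))
        - C * (F * ((B * Bᴴ + A * Aᴴ - 1) * (Fᴴ * Cᴴ))) := by
    simp only [conjTranspose_add, conjTranspose_mul, conjTranspose_one, Matrix.mul_add,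
      Matrix.add_mul, Matrix.mul_sub, Matrix.sub_mul, Matrix.mul_one, Matrix.one_mul,
      Matrix.mul_assoc]
    abel
  simp only [hDD, hDB, hBD, hBB, sub_self, Matrix.zero_mul, Matrix.mul_zero, neg_zero,
    sub_eq_zero, hFA] at hdefect
  rw [hdefect]
  simp only [conjTranspose_smul, conjTranspose_mul, Matrix.smul_mul, Matrix.mul_smul, smul_smul,
    Matrix.mul_sub, Matrix.sub_mul, sub_smul, one_smul, Matrix.mul_assoc]

end

theorem isUnit_smul_one_sub_of_posSemidef_one_sub_conjTranspose_mul_self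
    {n 𝕜 : Type*} [Fintype n] [DecidableEq n] [RCLike 𝕜] {A : Matrix n n 𝕜}
    (hA : (1 - Aᴴ * A).PosSemidef) {z : 𝕜} (hz : 1 < ‖z‖) : IsUnit (z • 1 - A) := by
  by_contra h
  rw [isUnit_iff_isUnit_det, isUnit_iff_ne_zero, not_not] at h
  obtain ⟨v, hv, hv_ker⟩ := exists_mulVec_eq_zero_iff.mpr h
  have hAv : A *ᵥ v = z • v := by
    rw [sub_mulVec, smul_mulVec, one_mulVec, sub_eq_zero] at hv_ker
    exact hv_ker.symm
  have hquad : star v ⬝ᵥ ((1 - Aᴴ * A) *ᵥ v) = (1 - (‖z‖ : 𝕜) ^ 2) * (star v ⬝ᵥ v) := by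
    rw [sub_mulVec, one_mulVec, ← mulVec_mulVec, dotProduct_sub, dotProduct_mulVec, ← star_mulVec,
      hAv, star_smul, smul_dotProduct, dotProduct_smul, smul_smul, smul_eq_mul, RCLike.star_def,
      RCLike.conj_mul, sub_mul, one_mul]
  have hz2 : 1 - (‖z‖ : 𝕜) ^ 2 < 0 := by
    rw [sub_neg]
    exact_mod_cast one_lt_pow₀ hz two_ne_zero
  exact (hquad ▸ hA.dotProduct_mulVec_nonneg v).not_gt
    (mul_neg_of_neg_of_pos hz2 (dotProduct_star_self_pos_iff.mpr hv))

end Matrix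

theorem transfer_function_contractive_outside {p n : ℕ}
    (D : Matrix (Fin p) (Fin p) ℂ) (C : Matrix (Fin p) (Fin n) ℂ)
    (B : Matrix (Fin n) (Fin p) ℂ) (A : Matrix (Fin n) (Fin n) ℂ)
    (hR : Matrix.fromBlocks D C B A ∈ Matrix.unitaryGroup (Fin p ⊕ Fin n) ℂ)
    (z : ℂ) (hz : 1 < ‖z‖) :
    IsUnit (z • (1 : Matrix (Fin n) (Fin n) ℂ) - A) ∧
    ((1 : Matrix (Fin p) (Fin p) ℂ) -
        (D + C * (z • (1 : Matrix (Fin n) (Fin n) ℂ) - A)⁻¹ * B) *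
        (D + C * (z • (1 : Matrix (Fin n) (Fin n) ℂ) - A)⁻¹ * B)ᴴ).PosSemidef := by
  have hA : (1 - Aᴴ * A).PosSemidef := by
    have hcol := mem_unitaryGroup_iff'.mp hR
    rw [star_eq_conjTranspose, conjTranspose_mul_fromBlocks_self, ← fromBlocks_one,
      fromBlocks_inj] at hcol
    obtain ⟨-, -, -, hCA⟩ := hcol
    rw [← hCA, add_sub_cancel_right]
    exact posSemidef_conjTranspose_mul_self C
  have hu := isUnit_smul_one_sub_of_posSemidef_one_sub_conjTranspose_mul_self hA hz
  refine ⟨hu, ?_⟩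
  rw [one_sub_transfer_mul_conjTranspose_transfer
    (mem_unitaryGroup_iff.mp hR) (nonsing_inv_mul _ ((isUnit_iff_isUnit_det _).mp hu)),
    RCLike.star_def, RCLike.conj_mul]
  refine (posSemidef_self_mul_conjTranspose _).smul ?_
  rw [sub_nonneg, ← RCLike.ofReal_one, ← RCLike.ofReal_pow, RCLike.ofReal_le_ofReal]
  exact (one_lt_pow₀ hz two_ne_zero).le
end

section
/- Let R = [[D, C],[B, A]] be a unitary (p+n)×(p+n) matrix, let (U, W) with U p×n, W n×n be an output normal pair (U*U + W*W = I_n) with W of spectral radius < 1, and let Q be the unique solution of the Stein equation Q - A*QW = C*U. Define V = D*U + B*QW. Then P := Q*Q satisfies the Stein equation P - W*PW = U*U - V*V. -/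
open Matrix

theorem nudelman_P_eq_QstarQ {p n : ℕ}
    (D : Matrix (Fin p) (Fin p) ℂ) (C : Matrix (Fin p) (Fin n) ℂ)
    (B : Matrix (Fin n) (Fin p) ℂ) (A : Matrix (Fin n) (Fin n) ℂ)
    (hR : Matrix.fromBlocks D C B A ∈ Matrix.unitaryGroup (Fin p ⊕ Fin n) ℂ)
    (hA : ∀ μ ∈ spectrum ℂ A, ‖μ‖ < 1)
    (U : Matrix (Fin p) (Fin n) ℂ) (W : Matrix (Fin n) (Fin n) ℂ)
    (hon : Uᴴ * U + Wᴴ * W = 1)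
    (hW : ∀ μ ∈ spectrum ℂ W, ‖μ‖ < 1)
    (Q : Matrix (Fin n) (Fin n) ℂ)
    (hQ : Q - Aᴴ * Q * W = Cᴴ * U)
    (V : Matrix (Fin p) (Fin n) ℂ)
    (hV : V = Dᴴ * U + Bᴴ * Q * W) :
    Qᴴ * Q - Wᴴ * (Qᴴ * Q) * W = Uᴴ * U - Vᴴ * V := by
  subst hV
  have hRR : (fromBlocks D C B A) * (fromBlocks D C B A)ᴴ = 1 := by
    have := (Matrix.mem_unitaryGroup_iff).mp hR
    simpa [star_eq_conjTranspose] using this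
  rw [fromBlocks_conjTranspose, fromBlocks_multiply, ← fromBlocks_one] at hRR
  have h11 : D * Dᴴ + C * Cᴴ = 1 := by
    have := congrArg Matrix.toBlocks₁₁ hRR
    simp only [Matrix.toBlocks_fromBlocks₁₁] at this; exact this
  have h12 : D * Bᴴ + C * Aᴴ = 0 := by
    have := congrArg Matrix.toBlocks₁₂ hRR
    simp only [Matrix.toBlocks_fromBlocks₁₂] at this; exact this
  have h21 : B * Dᴴ + A * Cᴴ = 0 := by
    have := congrArg Matrix.toBlocks₂₁ hRR
    simp only [Matrix.toBlocks_fromBlocks₂₁] at this; exact this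
  have h22 : B * Bᴴ + A * Aᴴ = 1 := by
    have := congrArg Matrix.toBlocks₂₂ hRR
    simp only [Matrix.toBlocks_fromBlocks₂₂] at this; exact this
  have hDD : ∀ X : Matrix (Fin p) (Fin n) ℂ, D * (Dᴴ * X) = X - C * (Cᴴ * X) := by
    intro X
    rw [← Matrix.mul_assoc, ← Matrix.mul_assoc, eq_sub_of_add_eq h11, Matrix.sub_mul, Matrix.one_mul]
  have hDB : ∀ X : Matrix (Fin n) (Fin n) ℂ, D * (Bᴴ * X) = -(C * (Aᴴ * X)) := by
    intro X
    rw [← Matrix.mul_assoc, ← Matrix.mul_assoc, eq_neg_of_add_eq_zero_left h12, Matrix.neg_mul]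
  have hBD : ∀ X : Matrix (Fin p) (Fin n) ℂ, B * (Dᴴ * X) = -(A * (Cᴴ * X)) := by
    intro X
    rw [← Matrix.mul_assoc, ← Matrix.mul_assoc, eq_neg_of_add_eq_zero_left h21, Matrix.neg_mul]
  have hBB : ∀ X : Matrix (Fin n) (Fin n) ℂ, B * (Bᴴ * X) = X - A * (Aᴴ * X) := by
    intro X
    rw [← Matrix.mul_assoc, ← Matrix.mul_assoc, eq_sub_of_add_eq h22, Matrix.sub_mul, Matrix.one_mul]
  have hCU : Cᴴ * U = Q - Aᴴ * (Q * W) := by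
    rw [← hQ, Matrix.mul_assoc]
  have hUC0 : Uᴴ * C = Qᴴ - Wᴴ * (Qᴴ * A) := by
    have := congrArg Matrix.conjTranspose hCU
    simpa [conjTranspose_sub, conjTranspose_mul, Matrix.mul_assoc] using this
  have hUC : ∀ X : Matrix (Fin n) (Fin n) ℂ, Uᴴ * (C * X) = Qᴴ * X - Wᴴ * (Qᴴ * (A * X)) := by
    intro X
    rw [← Matrix.mul_assoc, hUC0, Matrix.sub_mul, Matrix.mul_assoc, Matrix.mul_assoc]
  simp only [conjTranspose_add, conjTranspose_mul, conjTranspose_conjTranspose]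
  simp only [Matrix.add_mul, Matrix.mul_add, Matrix.mul_assoc]
  simp only [hDD, hDB, hBD, hBB, hCU, hUC]
  simp only [Matrix.mul_sub, Matrix.mul_neg, Matrix.mul_assoc, Matrix.mul_one, Matrix.sub_mul,
    Matrix.neg_mul]
  simp only [hDD, hDB, hBD, hBB, hCU, hUC]
  abel
end
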